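/- For real numbers 0 < x < y, the modified Bessel functions of the first kind satisfy I_1(x)/I_1(y) < e^{x-y} · (y/x). -/

import Mathlib

open Real

/-- The modified Bessel function of the first kind of order one:
`I₁(x) = (x/2) ∑_{k ≥ 0} (x²/4)^k / (k! Γ(k+2))`. -/
noncomputable def besselI1 (x : ℝ) : ℝ :=
  (x / 2) * ∑' k : ℕ, (x ^ 2 / 4) ^ k / (Nat.factorial k * Real.Gamma (k + 2))

/-!
With `aₖ(x) = (x/2)^k / k!` one has `I₁ = ∑ aₖ aₖ₊₁` and `I₀ = ∑ aₖ²`, and termwise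
differentiation gives `(s I₁(s))' = s I₀(s)`. By AM-GM, `2 I₁ ≤ ∑ aₖ² + ∑ aₖ₊₁² = 2 I₀ - 1`,
so `s ↦ s I₁(s) e^{-s}` has derivative `s e^{-s} (I₀ - I₁) > 0` and is strictly increasing on
`[0, ∞)`. Comparing its values at `x < y` is the inequality.
-/

open Set
open scoped Nat

noncomputable def besselTerm (x : ℝ) (k : ℕ) : ℝ := (x / 2) ^ k / k !

noncomputable def besselI0 (x : ℝ) : ℝ := ∑' k, besselTerm x k ^ 2

lemma besselTerm_nonneg {x : ℝ} (hx : 0 ≤ x) (k : ℕ) : 0 ≤ besselTerm x k := by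
  unfold besselTerm; positivity

lemma abs_besselTerm (x : ℝ) (k : ℕ) : |besselTerm x k| = besselTerm |x| k := by
  simp [besselTerm, abs_div, abs_pow]

lemma besselTerm_le_besselTerm {x y : ℝ} (hx : 0 ≤ x) (hxy : x ≤ y) (k : ℕ) :
    besselTerm x k ≤ besselTerm y k := by
  unfold besselTerm; gcongr

lemma besselTerm_mul_besselTerm_succ (x : ℝ) (k : ℕ) :
    besselTerm x k * besselTerm x (k + 1) = (x / 2) ^ (2 * k + 1) / (k ! * (k + 1)!) := by
  unfold besselTerm
  rw [div_mul_div_comm, ← pow_add, two_mul, add_assoc]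

lemma besselTerm_sq_le (x : ℝ) (k : ℕ) : besselTerm x k ^ 2 ≤ ((x / 2) ^ 2) ^ k / k ! := by
  rw [besselTerm, div_pow, ← pow_mul, mul_comm, pow_mul, sq (k ! : ℝ)]
  gcongr
  exact_mod_cast Nat.le_mul_of_pos_left _ (Nat.factorial_pos k)

lemma summable_besselTerm_sq (x : ℝ) : Summable fun k ↦ besselTerm x k ^ 2 :=
  .of_nonneg_of_le (fun _ ↦ sq_nonneg _) (besselTerm_sq_le x)
    (Real.summable_pow_div_factorial _)

lemma summable_besselTerm_mul_succ (x : ℝ) :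
    Summable fun k ↦ besselTerm x k * besselTerm x (k + 1) := by
  have hsq := summable_besselTerm_sq x
  refine .of_norm_bounded ((hsq.add ((summable_nat_add_iff 1).2 hsq)).div_const 2) fun k ↦ ?_
  rw [Real.norm_eq_abs, abs_mul, le_div_iff₀ two_pos, ← sq_abs (besselTerm x k),
    ← sq_abs (besselTerm x (k + 1))]
  nlinarith [two_mul_le_add_sq |besselTerm x k| |besselTerm x (k + 1)|]

lemma hasDerivAt_mul_besselTerm_mul_succ (k : ℕ) (x : ℝ) :
    HasDerivAt (fun s ↦ s * (besselTerm s k * besselTerm s (k + 1)))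
      (x * besselTerm x k ^ 2) x := by
  have hpoly : (fun s ↦ s * (besselTerm s k * besselTerm s (k + 1)))
      = fun s : ℝ ↦ 2 * (s / 2) ^ (2 * k + 2) / (k ! * (k + 1)! : ℝ) := by
    funext s
    rw [besselTerm_mul_besselTerm_succ]
    ring
  rw [hpoly]
  refine ((((hasDerivAt_id' x).div_const 2).fun_pow (2 * k + 2)).const_mul 2 |>.div_const
    (k ! * (k + 1)! : ℝ)).congr_deriv ?_
  rw [show 2 * k + 2 - 1 = 2 * k + 1 by omega]
  simp only [besselTerm, Nat.factorial_succ]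
  push_cast
  field_simp
  ring

lemma besselI1_eq_tsum (x : ℝ) :
    besselI1 x = ∑' k, besselTerm x k * besselTerm x (k + 1) := by
  rw [besselI1, ← tsum_mul_left]
  congr 1 with k
  have hGamma : Gamma ((k : ℝ) + 2) = (k + 1)! := by
    rw [← Gamma_nat_eq_factorial]; push_cast; ring_nf
  rw [besselTerm_mul_besselTerm_succ, hGamma, pow_succ _ (2 * k), pow_mul]
  ring

lemma besselI1_lt_besselI0 (x : ℝ) : besselI1 x < besselI0 x := by
  have hsq := summable_besselTerm_sq x
  have hshift : Summable fun k ↦ besselTerm x (k + 1) ^ 2 := (summable_nat_add_iff 1).2 hsq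
  have hshift_eq : ∑' k, besselTerm x (k + 1) ^ 2 = besselI0 x - 1 := by
    rw [besselI0, hsq.tsum_eq_zero_add]
    simp [besselTerm]
  have hle : besselI1 x ≤ (besselI0 x + (besselI0 x - 1)) / 2 := by
    rw [besselI1_eq_tsum, ← hshift_eq, besselI0, ← hsq.tsum_add hshift, ← tsum_div_const]
    refine (summable_besselTerm_mul_succ x).tsum_le_tsum (fun k ↦ ?_)
      ((hsq.add hshift).div_const 2)
    linarith [two_mul_le_add_sq (besselTerm x k) (besselTerm x (k + 1))]
  linarith

lemma besselI1_pos {x : ℝ} (hx : 0 < x) : 0 < besselI1 x := by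
  rw [besselI1_eq_tsum]
  refine (summable_besselTerm_mul_succ x).tsum_pos
    (fun k ↦ mul_nonneg (besselTerm_nonneg hx.le _) (besselTerm_nonneg hx.le _)) 0 ?_
  simp [besselTerm, hx]

lemma hasDerivAt_mul_besselI1 (x : ℝ) :
    HasDerivAt (fun s ↦ s * besselI1 s) (x * besselI0 x) x := by
  set R := |x| + 1
  have hbound : ∀ k, ∀ y ∈ Ioo (-R) R, ‖y * besselTerm y k ^ 2‖ ≤ R * besselTerm R k ^ 2 := by
    intro k y hy
    have hyR : |y| ≤ R := abs_le.2 ⟨hy.1.le, hy.2.le⟩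
    rw [Real.norm_eq_abs, abs_mul, abs_pow, abs_besselTerm]
    gcongr
    · exact besselTerm_nonneg (abs_nonneg y) k
    · exact besselTerm_le_besselTerm (abs_nonneg y) hyR k
  have hx : x ∈ Ioo (-R) R := abs_lt.1 (lt_add_one |x|)
  have h := hasDerivAt_tsum_of_isPreconnected ((summable_besselTerm_sq R).mul_left R)
    isOpen_Ioo isPreconnected_Ioo (fun k y _ ↦ hasDerivAt_mul_besselTerm_mul_succ k y) hbound hx
    ((summable_besselTerm_mul_succ x).mul_left x) hx
  simp only [tsum_mul_left, ← besselI1_eq_tsum] at h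
  exact h

lemma hasDerivAt_mul_besselI1_mul_exp_neg (x : ℝ) :
    HasDerivAt (fun s ↦ s * besselI1 s * exp (-s))
      (x * exp (-x) * (besselI0 x - besselI1 x)) x := by
  refine ((hasDerivAt_mul_besselI1 x).mul (hasDerivAt_neg x).exp).congr_deriv ?_
  ring

lemma strictMonoOn_mul_besselI1_mul_exp_neg :
    StrictMonoOn (fun s ↦ s * besselI1 s * exp (-s)) (Ici 0) := by
  refine strictMonoOn_of_deriv_pos (convex_Ici 0)
    (fun s _ ↦ (hasDerivAt_mul_besselI1_mul_exp_neg s).continuousAt.continuousWithinAt)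
    fun s hs ↦ ?_
  rw [interior_Ici] at hs
  rw [(hasDerivAt_mul_besselI1_mul_exp_neg s).deriv]
  exact mul_pos (mul_pos hs (exp_pos _)) (sub_pos.2 (besselI1_lt_besselI0 s))

/-- **Ratio bound for modified Bessel functions:** for `0 < x < y`,
`I₁(x)/I₁(y) < e^{x-y} · (y/x)`. -/
theorem besselI1_ratio_lt (x y : ℝ) (hx : 0 < x) (hxy : x < y) :
    besselI1 x / besselI1 y < Real.exp (x - y) * (y / x) := by
  have hy : 0 < y := hx.trans hxy
  have hmono : x * besselI1 x * exp (-x) < y * besselI1 y * exp (-y) :=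
    strictMonoOn_mul_besselI1_mul_exp_neg hx.le hy.le hxy
  rw [div_lt_iff₀ (besselI1_pos hy)]
  calc besselI1 x = x * besselI1 x * exp (-x) * (exp x / x) := by
        rw [exp_neg]; field_simp
    _ < y * besselI1 y * exp (-y) * (exp x / x) := by gcongr
    _ = exp (x - y) * (y / x) * besselI1 y := by
        rw [exp_neg, exp_sub]; field_simp
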